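/- The commutator rule decides a partition: for an r-th maximal bi-subalgebra B^[r] of su(2^p) (0 ≤ r ≤ 2p), the commutator subspaces W(B) for B ∈ 𝒢(B^[r]) are pairwise disjoint, nonempty, and their union is all of V; there are exactly 2^(2p−r) of them, and each W(B) has exactly 2^r elements. -/

import Mathlib

open scoped BigOperators

namespace QAP

/-- The index group `V = Z₂^p × Z₂^p` whose elements `(ζ,α)` label the
spinor generators `S^ζ_α` of `su(2^p)`. -/
abbrev V (p : ℕ) : Type := (Fin p → ZMod 2) × (Fin p → ZMod 2)

/-- The symplectic pairing `ω((ζ,α),(η,β)) = ζ·β + η·α` over `ZMod 2`. -/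
def omega {p : ℕ} (v w : V p) : ZMod 2 :=
  (∑ k, v.1 k * w.2 k) + (∑ k, w.1 k * v.2 k)

/-- `B` is an `r`-th maximal bi-subalgebra of `su(2^p)`: it is obtained from
`V` by a descending chain of `r` successive index-2 subgroups. -/
def IsRthMax {p : ℕ} (r : ℕ) (B : AddSubgroup (V p)) : Prop :=
  ∃ c : ℕ → AddSubgroup (V p), c 0 = ⊤ ∧ c r = B ∧
    ∀ i < r, c (i + 1) ≤ c i ∧ (c (i + 1)).relIndex (c i) = 2

/-- `𝒢(G)`: the family consisting of `G` together with all its index-2 subgroups. -/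
def GFam {p : ℕ} (G : AddSubgroup (V p)) : Set (AddSubgroup (V p)) :=
  {H | H = G ∨ (H ≤ G ∧ H.relIndex G = 2)}

/-- The commutator subspace `W(B)` determined by `B` relative to `B^[r]`:
elements of `V` commuting with exactly the members of `B` inside `B^[r]`. -/
def Wspace {p : ℕ} (Br B : AddSubgroup (V p)) : Set (V p) :=
  {v | {b : V p | b ∈ Br ∧ omega v b = 0} = (B : Set (V p))}

/-- The `⊓` operation on subsets of a subgroup `G`:
`B₁ ⊓ B₂ = (B₁ ∩ B₂) ∪ ((G \ B₁) ∩ (G \ B₂))`. -/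
def sqcap {p : ℕ} (G : AddSubgroup (V p)) (B₁ B₂ : Set (V p)) : Set (V p) :=
  (B₁ ∩ B₂) ∪ (((G : Set (V p)) \ B₁) ∩ (((G : Set (V p))) \ B₂))

/-!
For `v ∈ V`, the elements of `B^[r]` commuting with `v` form the kernel of the character
`ω(v, ·)` restricted to `B^[r]`, so they form a member of `𝒢(B^[r])`. Conversely every member of
`𝒢(B^[r])` is the kernel of a `ZMod 2`-valued character of `B^[r]`, which extends to `V` and, `ω`
being nondegenerate, is of the form `ω(v, ·)`; and a `ZMod 2`-valued character is determined by
its kernel. Hence the commutator subspaces are exactly the fibres of the surjective linear map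
`V → Hom(B^[r], ZMod 2)`, `v ↦ ω(v, ·)|B^[r]`: they partition `V`, there are
`|Hom(B^[r], ZMod 2)| = |B^[r]| = 2^(2p-r)` of them, and each is a coset of the kernel, of size
`[V : B^[r]] = 2^r`.
-/

end QAP

theorem AddSubgroup.index_eq_two_pow_of_relIndex_eq_two {G : Type*} [AddGroup G]
    {c : ℕ → AddSubgroup G} (h0 : c 0 = ⊤) {r : ℕ}
    (hc : ∀ i < r, c (i + 1) ≤ c i ∧ (c (i + 1)).relIndex (c i) = 2) :
    (c r).index = 2 ^ r := by
  induction r with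
  | zero => rw [h0, AddSubgroup.index_top, pow_zero]
  | succ n ih =>
    obtain ⟨hle, hrel⟩ := hc n n.lt_succ_self
    rw [← AddSubgroup.relIndex_mul_index hle, hrel, ih fun i hi => hc i (hi.trans n.lt_succ_self),
      pow_succ, mul_comm]

theorem AddSubgroup.exists_ker_eq_of_index_eq_two {G : Type*} [AddCommGroup G]
    {H : AddSubgroup G} (h : H.index = 2) : ∃ f : G →+ ZMod 2, f.ker = H := by
  let e : G ⧸ H ≃+ ZMod 2 := addEquivOfPrimeCardEq h (Nat.card_zmod 2)
  exact ⟨e.toAddMonoidHom.comp (QuotientAddGroup.mk' H), by ext; simp⟩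

theorem AddMonoidHom.inf_ker_eq_or_relIndex_eq_two {G : Type*} [AddGroup G] (H : AddSubgroup G)
    (f : G →+ ZMod 2) : H ⊓ f.ker = H ∨ (H ⊓ f.ker).relIndex H = 2 := by
  rw [inf_eq_left, AddSubgroup.inf_relIndex_left, AddSubgroup.relIndex_ker,
    ← AddSubgroup.map_eq_bot_iff]
  have : Fact (Nat.card (ZMod 2)).Prime := ⟨by rw [Nat.card_zmod]; exact Nat.prime_two⟩
  refine (H.map f).eq_bot_or_eq_top_of_prime_card.imp_right fun htop => ?_
  rw [htop, AddSubgroup.card_top, Nat.card_zmod]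

theorem AddMonoidHom.card_ker_mul_card_of_surjective {G H : Type*} [AddGroup G] [AddGroup H]
    {f : G →+ H} (hf : Function.Surjective f) : Nat.card f.ker * Nat.card H = Nat.card G := by
  rw [← AddSubgroup.card_top (G := H), ← f.range_eq_top.mpr hf, ← AddSubgroup.index_ker,
    AddSubgroup.card_mul_index]

theorem ZMod.eq_of_eq_zero_iff_eq_zero {x y : ZMod 2} (h : x = 0 ↔ y = 0) : x = y := by
  revert x y; decide

theorem Nat.card_range_preimage_singleton {α β : Type*} {f : α → β}
    (hf : Function.Surjective f) : Nat.card (Set.range fun b => f ⁻¹' {b}) = Nat.card β := by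
  refine Nat.card_range_of_injective fun b b' h => ?_
  obtain ⟨a, rfl⟩ := hf b
  exact (h ▸ rfl : a ∈ f ⁻¹' {b'})

theorem Subspace.card_dual {K V : Type*} [Field K] [AddCommGroup V] [Module K V]
    [FiniteDimensional K V] : Nat.card (Module.Dual K V) = Nat.card V :=
  Nat.card_congr (LinearEquiv.ofFinrankEq _ _ Subspace.dual_finrank_eq).toEquiv

theorem LinearMap.BilinForm.Nondegenerate.domRestrict₂_surjective {K V : Type*} [Field K]
    [AddCommGroup V] [Module K V] [FiniteDimensional K V] {B : LinearMap.BilinForm K V}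
    (hB : B.Nondegenerate) (W : Submodule K V) : Function.Surjective (B.domRestrict₂ W) := by
  intro f
  obtain ⟨g, rfl⟩ := Subspace.dualRestrict_surjective f
  refine ⟨(B.toDual hB).symm g, ?_⟩
  ext x
  rw [domRestrict₂_apply, ← LinearMap.BilinForm.toDual_def hB, LinearEquiv.apply_symm_apply,
    Submodule.dualRestrict_apply]

namespace QAP

section

variable {p : ℕ}

theorem card_V : Nat.card (V p) = 2 ^ (2 * p) := by
  rw [Nat.card_eq_fintype_card, Fintype.card_prod, Fintype.card_fun, ZMod.card,
    Fintype.card_fin, ← pow_add, two_mul]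

theorem IsRthMax.index_eq {r : ℕ} {Br : AddSubgroup (V p)} (hBr : IsRthMax r Br) :
    Br.index = 2 ^ r := by
  obtain ⟨c, h0, rfl, hc⟩ := hBr
  exact AddSubgroup.index_eq_two_pow_of_relIndex_eq_two h0 hc

theorem IsRthMax.card_eq {r : ℕ} {Br : AddSubgroup (V p)} (hBr : IsRthMax r Br) :
    Nat.card Br = 2 ^ (2 * p - r) := by
  have h := Br.card_mul_index
  rw [hBr.index_eq, card_V] at h
  have hr : r ≤ 2 * p := (Nat.pow_dvd_pow_iff_le_right one_lt_two).mp (Dvd.intro_left _ h)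
  rw [← Nat.pow_div hr two_pos, ← h, Nat.mul_div_cancel _ (by positivity)]

def omegaForm (p : ℕ) : LinearMap.BilinForm (ZMod 2) (V p) :=
  LinearMap.mk₂ (ZMod 2) omega
    (fun v v' w => by
      simp only [omega, Prod.fst_add, Prod.snd_add, Pi.add_apply, add_mul, mul_add,
        Finset.sum_add_distrib]; ring)
    (fun c v w => by
      simp only [omega, Prod.smul_fst, Prod.smul_snd, Pi.smul_apply, smul_eq_mul, mul_add,
        Finset.mul_sum, mul_assoc, mul_left_comm])
    (fun v w w' => by
      simp only [omega, Prod.fst_add, Prod.snd_add, Pi.add_apply, add_mul, mul_add,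
        Finset.sum_add_distrib]; ring)
    (fun c v w => by
      simp only [omega, Prod.smul_fst, Prod.smul_snd, Pi.smul_apply, smul_eq_mul, mul_add,
        Finset.mul_sum, mul_assoc, mul_left_comm])

@[simp] theorem omegaForm_apply (v w : V p) : omegaForm p v w = omega v w := rfl

theorem omegaForm_nondegenerate : (omegaForm p).Nondegenerate := by
  refine (LinearMap.IsRefl.nondegenerate_iff_separatingLeft
    fun v w h => (add_comm _ _).trans h).mpr fun v h => ?_
  have h₁ : ∀ k, v.1 k = 0 := fun k => by
    simpa [omega, Pi.single_apply, mul_ite, Finset.sum_ite_eq'] using h (0, Pi.single k 1)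
  have h₂ : ∀ k, v.2 k = 0 := fun k => by
    simpa [omega, Pi.single_apply, ite_mul, Finset.sum_ite_eq'] using h (Pi.single k 1, 0)
  exact Prod.ext (funext h₁) (funext h₂)

def commutant (Br : AddSubgroup (V p)) (v : V p) : AddSubgroup (V p) :=
  Br ⊓ (omegaForm p v).toAddMonoidHom.ker

theorem mem_commutant {Br : AddSubgroup (V p)} {v b : V p} :
    b ∈ commutant Br v ↔ b ∈ Br ∧ omega v b = 0 := Iff.rfl

theorem mem_wspace_iff {Br B : AddSubgroup (V p)} {v : V p} :
    v ∈ Wspace Br B ↔ commutant Br v = B :=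
  show (commutant Br v : Set (V p)) = B ↔ _ from SetLike.coe_set_eq

theorem commutant_mem_gFam (Br : AddSubgroup (V p)) (v : V p) : commutant Br v ∈ GFam Br :=
  ((omegaForm p v).toAddMonoidHom.inf_ker_eq_or_relIndex_eq_two Br).imp id (⟨inf_le_left, ·⟩)

def restrictedPairing (Br : AddSubgroup (V p)) :
    V p →ₗ[ZMod 2] Module.Dual (ZMod 2) (AddSubgroup.toZModSubmodule 2 Br) :=
  (omegaForm p).domRestrict₂ _

@[simp] theorem restrictedPairing_apply (Br : AddSubgroup (V p)) (v : V p)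
    (b : AddSubgroup.toZModSubmodule 2 Br) : restrictedPairing Br v b = omega v b := rfl

theorem card_dual_toZModSubmodule (Br : AddSubgroup (V p)) :
    Nat.card (Module.Dual (ZMod 2) (AddSubgroup.toZModSubmodule 2 Br)) = Nat.card Br :=
  Subspace.card_dual

theorem restrictedPairing_surjective (Br : AddSubgroup (V p)) :
    Function.Surjective (restrictedPairing Br) :=
  omegaForm_nondegenerate.domRestrict₂_surjective _

theorem commutant_eq_commutant_iff {Br : AddSubgroup (V p)} {v w : V p} :
    commutant Br v = commutant Br w ↔ restrictedPairing Br v = restrictedPairing Br w := by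
  constructor
  · intro h
    ext ⟨b, hb⟩
    have hb' : b ∈ Br := hb
    refine ZMod.eq_of_eq_zero_iff_eq_zero ?_
    simpa [mem_commutant, hb'] using SetLike.ext_iff.mp h b
  · intro h
    ext b
    simp only [mem_commutant, and_congr_right_iff]
    intro hb
    rw [show omega v b = omega w b from LinearMap.congr_fun h ⟨b, hb⟩]

theorem wspace_commutant (Br : AddSubgroup (V p)) (v : V p) :
    Wspace Br (commutant Br v) = restrictedPairing Br ⁻¹' {restrictedPairing Br v} := by
  ext w
  rw [mem_wspace_iff, commutant_eq_commutant_iff]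
  rfl

theorem exists_commutant_eq {Br B : AddSubgroup (V p)} (hB : B ∈ GFam Br) :
    ∃ v, commutant Br v = B := by
  rcases hB with rfl | ⟨hle, hindex⟩
  · exact ⟨0, by ext; simp [mem_commutant, omega]⟩
  obtain ⟨f, hf⟩ := AddSubgroup.exists_ker_eq_of_index_eq_two hindex
  let e : AddSubgroup.toZModSubmodule 2 Br →+ Br :=
    ⟨⟨fun b => ⟨b, b.property⟩, rfl⟩, fun _ _ => rfl⟩
  obtain ⟨v, hv⟩ := restrictedPairing_surjective Br ((f.comp e).toZModLinearMap 2)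
  have key : ∀ b (hb : b ∈ Br), omega v b = 0 ↔ b ∈ B := fun b hb => by
    rw [show omega v b = f ⟨b, hb⟩ from LinearMap.congr_fun hv ⟨b, hb⟩, ← AddMonoidHom.mem_ker,
      hf, AddSubgroup.mem_addSubgroupOf]
  exact ⟨v, AddSubgroup.ext fun b =>
    ⟨fun ⟨hb, h0⟩ => (key b hb).1 h0, fun hb => ⟨hle hb, (key b (hle hb)).2 hb⟩⟩⟩

theorem card_ker_restrictedPairing {r : ℕ} {Br : AddSubgroup (V p)} (hBr : IsRthMax r Br) :
    Nat.card (restrictedPairing Br).toAddMonoidHom.ker = 2 ^ r := by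
  have h := AddMonoidHom.card_ker_mul_card_of_surjective
    (f := (restrictedPairing Br).toAddMonoidHom) (restrictedPairing_surjective Br)
  rw [card_dual_toZModSubmodule, ← Br.card_mul_index, hBr.index_eq, mul_comm] at h
  exact Nat.eq_of_mul_eq_mul_left Nat.card_pos h

theorem card_wspace {r : ℕ} {Br B : AddSubgroup (V p)} (hBr : IsRthMax r Br)
    (hB : B ∈ GFam Br) : Nat.card (Wspace Br B) = 2 ^ r := by
  obtain ⟨v, rfl⟩ := exists_commutant_eq hB
  rw [wspace_commutant, ← card_ker_restrictedPairing hBr]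
  exact Nat.card_congr ((restrictedPairing Br).toAddMonoidHom.fiberEquivKer v)

theorem card_setOf_wspace {r : ℕ} {Br : AddSubgroup (V p)} (hBr : IsRthMax r Br) :
    Nat.card {S : Set (V p) | ∃ B ∈ GFam Br, S = Wspace Br B} = 2 ^ (2 * p - r) := by
  have hset : {S : Set (V p) | ∃ B ∈ GFam Br, S = Wspace Br B} =
      Set.range fun φ => restrictedPairing Br ⁻¹' {φ} := by
    ext S
    constructor
    · rintro ⟨B, hB, rfl⟩
      obtain ⟨v, rfl⟩ := exists_commutant_eq hB
      exact ⟨restrictedPairing Br v, (wspace_commutant Br v).symm⟩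
    · rintro ⟨φ, rfl⟩
      obtain ⟨v, rfl⟩ := restrictedPairing_surjective Br φ
      exact ⟨commutant Br v, commutant_mem_gFam Br v, (wspace_commutant Br v).symm⟩
  rw [hset, Nat.card_range_preimage_singleton (restrictedPairing_surjective Br),
    card_dual_toZModSubmodule, hBr.card_eq]

end

theorem commutator_partition_general {p r : ℕ}
    (Br : AddSubgroup (V p)) (hBr : IsRthMax r Br) :
    (∀ B₁ ∈ GFam Br, ∀ B₂ ∈ GFam Br, B₁ ≠ B₂ → Wspace Br B₁ ∩ Wspace Br B₂ = ∅) ∧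
    (∀ B ∈ GFam Br, (Wspace Br B).Nonempty) ∧
    (⋃ B ∈ GFam Br, Wspace Br B) = Set.univ ∧
    Nat.card {S : Set (V p) | ∃ B ∈ GFam Br, S = Wspace Br B} = 2 ^ (2 * p - r) ∧
    (∀ B ∈ GFam Br, Nat.card (Wspace Br B) = 2 ^ r) := by
  refine ⟨fun B₁ _ B₂ _ hne => ?_, fun B hB => ?_, ?_, card_setOf_wspace hBr,
    fun B hB => card_wspace hBr hB⟩
  · exact Set.eq_empty_iff_forall_notMem.mpr fun v ⟨h₁, h₂⟩ =>
      hne ((mem_wspace_iff.mp h₁).symm.trans (mem_wspace_iff.mp h₂))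
  · obtain ⟨v, rfl⟩ := exists_commutant_eq hB
    exact ⟨v, mem_wspace_iff.mpr rfl⟩
  · exact Set.eq_univ_of_forall fun v =>
      Set.mem_biUnion (commutant_mem_gFam Br v) (mem_wspace_iff.mpr rfl)

/-- the commutator rule decides a partition: the commutator subspaces
`W(B)`, `B ∈ 𝒢(B^[r])`, are pairwise disjoint, nonempty, cover `V`; there are
exactly `2^(2p−r)` of them and each has exactly `2^r` elements. -/
theorem commutator_partition {p r : ℕ} (hp : 1 ≤ p) (hr : r ≤ 2 * p)
    (Br : AddSubgroup (V p)) (hBr : IsRthMax r Br) :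
    (∀ B₁ ∈ GFam Br, ∀ B₂ ∈ GFam Br, B₁ ≠ B₂ → Wspace Br B₁ ∩ Wspace Br B₂ = ∅) ∧
    (∀ B ∈ GFam Br, (Wspace Br B).Nonempty) ∧
    (⋃ B ∈ GFam Br, Wspace Br B) = Set.univ ∧
    Nat.card {S : Set (V p) | ∃ B ∈ GFam Br, S = Wspace Br B} = 2 ^ (2 * p - r) ∧
    (∀ B ∈ GFam Br, Nat.card (Wspace Br B) = 2 ^ r) :=
  commutator_partition_general Br hBr
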